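/- arXiv:2404.14893 — 7 statements merged into one kernel-verified Lean document; each statement's English description precedes it below -/
import Mathlib

section
/- Suppose κ ≥ 2ℓ_g. Let τ > 0, let s ≥ 1 be an integer, let U^1, …, U^{s+1} ∈ V be stage values, and let D_{kℓ} : V → V (for 1 ≤ ℓ ≤ k ≤ s) be linear maps such that the differential form of the explicit exponential Runge–Kutta method holds: ∑_{ℓ=1}^{k} D_{kℓ}(U^{ℓ+1} − U^{ℓ}) = τ·g_κ(U^{k}) − (τ/2)·L_κ(U^{k+1} + U^{k}) for every 1 ≤ k ≤ s. Then for every 1 ≤ j ≤ s the stage energy dissipation law holds: E[U^{j+1}] − E[U^{1}] ≤ −(1/τ)·∑_{k=1}^{j} ⟨U^{k+1} − U^{k}, ∑_{ℓ=1}^{k} D_{kℓ}(U^{ℓ+1} − U^{ℓ})⟩. In particular, if in addition the quadratic form (v_1, …, v_s) ↦ ∑_{k=1}^{s} ⟨v_k, ∑_{ℓ=1}^{k} D_{kℓ}(v_ℓ)⟩ is nonnegative (i.e. the associated differentiation matrix of operators has positive semidefinite symmetric part), then E[U^{s+1}] ≤ E[U^{1}]. -/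
/-!
Since `∇G` is `ℓ`-Lipschitz and `κ ≥ 2ℓ`, the mean value inequality bounds the increment of `G`
over one stage by `⟪∇G u, v - u⟫ + (κ/2)‖v - u‖²`; together with the symmetry of `L` this makes
each stage equation an energy inequality
`E v - E u ≤ -(1/τ) ⟪v - u, τ g_κ(u) - (τ/2) L_κ(v + u)⟫`. Summing these over the stages
telescopes to the dissipation law, and positivity of the differentiation form gives decay.
-/

open scoped RealInnerProductSpace NNReal
open Finset InnerProductSpace

section

variable {V : Type*} [NormedAddCommGroup V] [InnerProductSpace ℝ V]

theorem sub_le_inner_gradient_add_mul_norm_sq [CompleteSpace V] {G : V → ℝ} {gradG : V → V}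
    (hG : ∀ x, HasGradientAt G (gradG x) x) {ℓ : ℝ≥0} (hLip : LipschitzWith ℓ gradG) (x y : V) :
    G y - G x ≤ ⟪gradG x, y - x⟫ + ℓ * ‖y - x‖ ^ 2 := by
  have hbound : ∀ z ∈ Metric.closedBall x ‖y - x‖,
      ‖toDual ℝ V (gradG z) - toDual ℝ V (gradG x)‖ ≤ ℓ * ‖y - x‖ := by
    intro z hz
    rw [← map_sub, LinearIsometryEquiv.norm_map, ← dist_eq_norm]
    exact (hLip.dist_le_mul z x).trans (by gcongr; exact Metric.mem_closedBall.mp hz)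
  have hmvt := (convex_closedBall x ‖y - x‖).norm_image_sub_le_of_norm_hasFDerivWithin_le'
    (fun z _ => (hasGradientAt_iff_hasFDerivAt.mp (hG z)).hasFDerivWithinAt) hbound
    (Metric.mem_closedBall_self (norm_nonneg _)) (y := y) (by simp [dist_eq_norm])
  rw [toDual_apply_apply, Real.norm_eq_abs] at hmvt
  linarith [le_abs_self (G y - G x - ⟪gradG x, y - x⟫)]

theorem LinearMap.IsSymmetric.inner_map_self_sub_inner_map_self {L : V →ₗ[ℝ] V}
    (hL : L.IsSymmetric) (u v : V) :
    ⟪v, L v⟫ - ⟪u, L u⟫ = ⟪v - u, L (v + u)⟫ := by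
  have hcross : ⟪v, L u⟫ = ⟪u, L v⟫ := by rw [← hL, real_inner_comm]
  rw [map_add, inner_sub_left, inner_add_right, inner_add_right]
  linarith

theorem sub_le_sum_Icc_of_sub_le {e a : ℕ → ℝ} {j : ℕ}
    (h : ∀ k ∈ Icc 1 j, e (k + 1) - e k ≤ a k) :
    e (j + 1) - e 1 ≤ ∑ k ∈ Icc 1 j, a k := by
  rw [← Finset.Ico_add_one_right_eq_Icc] at h ⊢
  rw [← sum_Ico_sub e (by omega : 1 ≤ j + 1)]
  exact sum_le_sum h

theorem energy_sub_le_neg_inner_stage [CompleteSpace V] {L : V →ₗ[ℝ] V} (hL : L.IsSymmetric)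
    {G : V → ℝ} {gradG : V → V} (hG : ∀ x, HasGradientAt G (gradG x) x)
    {ℓ : ℝ≥0} (hLip : LipschitzWith ℓ gradG) {κ : ℝ} (hκ : 2 * (ℓ : ℝ) ≤ κ)
    {E : V → ℝ} (hE : ∀ v, E v = (1/2) * ⟪v, L v⟫ + G v)
    {Lκ : V → V} (hLκ : ∀ v, Lκ v = L v + κ • v)
    {gκ : V → V} (hgκ : ∀ v, gκ v = -gradG v + κ • v) {τ : ℝ} (hτ : τ ≠ 0) (u v : V) :
    E v - E u ≤ -(1 / τ) * ⟪v - u, τ • gκ u - (τ / 2) • Lκ (v + u)⟫ := by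
  have hstage : τ • gκ u - (τ / 2) • Lκ (v + u)
      = (-τ) • (gradG u + (1 / 2 : ℝ) • L (v + u) + (κ / 2) • (v - u)) := by
    rw [hgκ, hLκ]; module
  have hrhs : -(1 / τ) * ⟪v - u, τ • gκ u - (τ / 2) • Lκ (v + u)⟫
      = ⟪gradG u, v - u⟫ + (1 / 2) * ⟪v - u, L (v + u)⟫ + κ / 2 * ‖v - u‖ ^ 2 := by
    rw [hstage, real_inner_smul_right, inner_add_right, inner_add_right, real_inner_smul_right,
      real_inner_smul_right, real_inner_self_eq_norm_sq, real_inner_comm (gradG u)]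
    field_simp
  have hlhs : E v - E u = (1 / 2) * ⟪v - u, L (v + u)⟫ + (G v - G u) := by
    rw [hE, hE, ← hL.inner_map_self_sub_inner_map_self]; ring
  have hcurv : (ℓ : ℝ) * ‖v - u‖ ^ 2 ≤ κ / 2 * ‖v - u‖ ^ 2 := by
    gcongr; linarith
  rw [hrhs, hlhs]
  linarith [sub_le_inner_gradient_add_mul_norm_sq hG hLip u v]
end

theorem stmt_0_general
    {V : Type*} [NormedAddCommGroup V] [InnerProductSpace ℝ V] [FiniteDimensional ℝ V]
    (L : V →ₗ[ℝ] V)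
    (hLsymm : ∀ x y : V, ⟪L x, y⟫ = ⟪x, L y⟫)
    (G : V → ℝ) (gradG : V → V)
    (hG : ∀ x, HasGradientAt G (gradG x) x)
    (ℓ : ℝ≥0)
    (hLip : LipschitzWith ℓ gradG)
    (κ : ℝ) (hκ : 2 * (ℓ : ℝ) ≤ κ)
    (E : V → ℝ) (hE : ∀ v, E v = (1/2) * ⟪v, L v⟫ + G v)
    (Lκ : V → V) (hLκ : ∀ v, Lκ v = L v + κ • v)
    (gκ : V → V) (hgκ : ∀ v, gκ v = -gradG v + κ • v)
    (τ : ℝ) (hτ : 0 < τ)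
    (s : ℕ)
    (U : ℕ → V)
    (D : ℕ → ℕ → V →ₗ[ℝ] V)
    (hscheme : ∀ k, 1 ≤ k → k ≤ s →
      ∑ l ∈ Finset.Icc 1 k, D k l (U (l + 1) - U l)
        = τ • gκ (U k) - (τ / 2) • Lκ (U (k + 1) + U k)) :
    (∀ j, 1 ≤ j → j ≤ s →
      E (U (j + 1)) - E (U 1)
        ≤ -(1 / τ) * ∑ k ∈ Finset.Icc 1 j,
            ⟪U (k + 1) - U k, ∑ l ∈ Finset.Icc 1 k, D k l (U (l + 1) - U l)⟫)
    ∧ ((∀ v : ℕ → V,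
          0 ≤ ∑ k ∈ Finset.Icc 1 s, ⟪v k, ∑ l ∈ Finset.Icc 1 k, D k l (v l)⟫) →
        E (U (s + 1)) ≤ E (U 1)) := by
  have hdiss : ∀ j ≤ s, E (U (j + 1)) - E (U 1)
      ≤ -(1 / τ) * ∑ k ∈ Finset.Icc 1 j,
          ⟪U (k + 1) - U k, ∑ l ∈ Finset.Icc 1 k, D k l (U (l + 1) - U l)⟫ := by
    intro j hj
    rw [mul_sum]
    refine sub_le_sum_Icc_of_sub_le (e := fun k => E (U k)) fun k hk => ?_
    rw [hscheme k (mem_Icc.mp hk).1 ((mem_Icc.mp hk).2.trans hj)]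
    exact energy_sub_le_neg_inner_stage hLsymm hG hLip hκ hE hLκ hgκ hτ.ne' (U k) (U (k + 1))
  refine ⟨fun j _ hj => hdiss j hj, fun hpos => ?_⟩
  have hform := hpos fun k => U (k + 1) - U k
  have hinv : 0 < 1 / τ := by positivity
  nlinarith [hdiss s le_rfl]

/-- Stage energy dissipation law for the differential form of an explicit
exponential Runge–Kutta method, and unconditional energy decay when the
associated differentiation quadratic form is positive semidefinite. -/
theorem stmt_0
    {V : Type*} [NormedAddCommGroup V] [InnerProductSpace ℝ V] [FiniteDimensional ℝ V]
    (L : V →ₗ[ℝ] V)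
    (hLsymm : ∀ x y : V, ⟪L x, y⟫ = ⟪x, L y⟫)
    (hLpos : ∀ x : V, 0 ≤ ⟪x, L x⟫)
    (G : V → ℝ) (gradG : V → V)
    (hG : ∀ x, HasGradientAt G (gradG x) x)
    (ℓ : ℝ≥0) (hℓ : 0 < ℓ)
    (hLip : LipschitzWith ℓ gradG)
    (κ : ℝ) (hκ : 2 * (ℓ : ℝ) ≤ κ)
    (E : V → ℝ) (hE : ∀ v, E v = (1/2) * ⟪v, L v⟫ + G v)
    (Lκ : V → V) (hLκ : ∀ v, Lκ v = L v + κ • v)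
    (gκ : V → V) (hgκ : ∀ v, gκ v = -gradG v + κ • v)
    (τ : ℝ) (hτ : 0 < τ)
    (s : ℕ) (hs : 1 ≤ s)
    (U : ℕ → V)
    (D : ℕ → ℕ → V →ₗ[ℝ] V)
    (hscheme : ∀ k, 1 ≤ k → k ≤ s →
      ∑ l ∈ Finset.Icc 1 k, D k l (U (l + 1) - U l)
        = τ • gκ (U k) - (τ / 2) • Lκ (U (k + 1) + U k)) :
    (∀ j, 1 ≤ j → j ≤ s →
      E (U (j + 1)) - E (U 1)
        ≤ -(1 / τ) * ∑ k ∈ Finset.Icc 1 j,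
            ⟪U (k + 1) - U k, ∑ l ∈ Finset.Icc 1 k, D k l (U (l + 1) - U l)⟫)
    ∧ ((∀ v : ℕ → V,
          0 ≤ ∑ k ∈ Finset.Icc 1 s, ⟪v k, ∑ l ∈ Finset.Icc 1 k, D k l (v l)⟫) →
        E (U (s + 1)) ≤ E (U 1)) :=
  stmt_0_general L hLsymm G gradG hG ℓ hLip κ hκ E hE Lκ hLκ gκ hgκ τ hτ s U D hscheme
end

section
/- If κ ≥ 2ℓ_g, then for all u, v ∈ V one has ⟨u − v, g_κ(v) − (1/2)·L_κ(u + v)⟩ ≤ E[v] − E[u]. -/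
open scoped RealInnerProductSpace NNReal

/-!
Expanding both sides, the `L`-terms cancel because `L` is symmetric, and the claim reduces to
`G u - G v - ⟪∇G v, u - v⟫ ≤ κ/2 ‖u - v‖²`. The descent lemma bounds the left side by
`ℓ/2 ‖u - v‖²`, so `ℓ ≤ κ` already suffices.
-/

section

variable {F : Type*} [NormedAddCommGroup F] [InnerProductSpace ℝ F]

theorem HasGradientAt.hasDerivAt_comp_add_smul [CompleteSpace F] {f : F → ℝ} {g x y : F}
    {t : ℝ} (hf : HasGradientAt f g (x + t • y)) :
    HasDerivAt (fun s : ℝ => f (x + s • y)) ⟪g, y⟫ t := by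
  have hline : HasDerivAt (fun s : ℝ => x + s • y) y t :=
    ((hasDerivAt_id t).smul_const y).const_add x |>.congr_deriv (one_smul ℝ y)
  exact (hasGradientAt_iff_hasFDerivAt.mp hf).comp_hasDerivAt t hline

theorem sub_sub_inner_le_of_lipschitzWith_gradient [CompleteSpace F] {f : F → ℝ} {f' : F → F}
    {K : ℝ≥0} (hf : ∀ x, HasGradientAt f (f' x) x) (hK : LipschitzWith K f') (x y : F) :
    f y - f x - ⟪f' x, y - x⟫ ≤ K / 2 * ‖y - x‖ ^ 2 := by
  set d := y - x
  let ψ : ℝ → ℝ := fun t => f (x + t • d) - t * ⟪f' x, d⟫ - K / 2 * t ^ 2 * ‖d‖ ^ 2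
  have hψ : ∀ t, HasDerivAt ψ (⟪f' (x + t • d) - f' x, d⟫ - K * t * ‖d‖ ^ 2) t := by
    intro t
    have := (((hf (x + t • d)).hasDerivAt_comp_add_smul).sub
      ((hasDerivAt_id t).mul_const ⟪f' x, d⟫)).sub
      (((hasDerivAt_pow 2 t).const_mul (K / 2 : ℝ)).mul_const (‖d‖ ^ 2))
    refine this.congr_deriv ?_
    rw [inner_sub_left]; push_cast; ring
  have hψ_nonpos : ∀ t ∈ interior (Set.Ici (0 : ℝ)),
      ⟪f' (x + t • d) - f' x, d⟫ - K * t * ‖d‖ ^ 2 ≤ 0 := by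
    intro t ht
    rw [interior_Ici] at ht
    have hlip : ‖f' (x + t • d) - f' x‖ ≤ K * (t * ‖d‖) := by
      simpa [dist_eq_norm, norm_smul, abs_of_pos ht.out] using hK.dist_le_mul (x + t • d) x
    rw [sub_nonpos]
    calc ⟪f' (x + t • d) - f' x, d⟫ ≤ ‖f' (x + t • d) - f' x‖ * ‖d‖ := real_inner_le_norm _ _
      _ ≤ K * (t * ‖d‖) * ‖d‖ := by gcongr
      _ = K * t * ‖d‖ ^ 2 := by ring
  have hanti : AntitoneOn ψ (Set.Ici 0) := antitoneOn_of_hasDerivWithinAt_nonpos (convex_Ici 0)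
    (fun t _ => (hψ t).continuousAt.continuousWithinAt) (fun t _ => (hψ t).hasDerivWithinAt)
    hψ_nonpos
  have h10 : ψ 1 ≤ ψ 0 := hanti Set.self_mem_Ici (Set.mem_Ici.mpr zero_le_one) zero_le_one
  simp only [ψ, d, zero_smul, one_smul, add_zero, add_sub_cancel, zero_mul, one_mul, one_pow,
    mul_one, sub_zero, ne_eq, OfNat.ofNat_ne_zero, not_false_eq_true, zero_pow, mul_zero] at h10
  linarith

theorem LinearMap.IsSymmetric.inner_sub_map_add {T : F →ₗ[ℝ] F} (hT : T.IsSymmetric)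
    (u v : F) : ⟪u - v, T (u + v)⟫ = ⟪u, T u⟫ - ⟪v, T v⟫ := by
  rw [map_add, inner_sub_left, inner_add_right, inner_add_right, ← hT v u, real_inner_comm (T v)]
  ring

theorem inner_sub_sub_half_smul_add (u v : F) :
    ⟪u - v, v - (1/2 : ℝ) • (u + v)⟫ = -(1/2) * ‖u - v‖ ^ 2 := by
  have : v - (1/2 : ℝ) • (u + v) = -(1/2 : ℝ) • (u - v) := by module
  rw [this, real_inner_smul_right, real_inner_self_eq_norm_sq]

end

theorem stmt_1_general
    {V : Type*} [NormedAddCommGroup V] [InnerProductSpace ℝ V] [FiniteDimensional ℝ V]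
    (L : V →ₗ[ℝ] V)
    (hLsymm : ∀ x y : V, ⟪L x, y⟫ = ⟪x, L y⟫)
    (G : V → ℝ) (gradG : V → V)
    (hG : ∀ x, HasGradientAt G (gradG x) x)
    (ℓ : ℝ≥0)
    (hLip : LipschitzWith ℓ gradG)
    (κ : ℝ) (hκ : 2 * (ℓ : ℝ) ≤ κ)
    (E : V → ℝ) (hE : ∀ v, E v = (1/2) * ⟪v, L v⟫ + G v)
    (Lκ : V → V) (hLκ : ∀ v, Lκ v = L v + κ • v)
    (gκ : V → V) (hgκ : ∀ v, gκ v = -gradG v + κ • v)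
    (u v : V) :
    ⟪u - v, gκ v - (1/2 : ℝ) • Lκ (u + v)⟫ ≤ E v - E u := by
  have hdescent := sub_sub_inner_le_of_lipschitzWith_gradient hG hLip v u
  have hquad := LinearMap.IsSymmetric.inner_sub_map_add hLsymm u v
  have hκ_part := inner_sub_sub_half_smul_add u v
  have hℓκ : (ℓ : ℝ) / 2 * ‖u - v‖ ^ 2 ≤ κ / 2 * ‖u - v‖ ^ 2 := by
    gcongr
    linarith [ℓ.coe_nonneg]
  have hsplit : gκ v - (1/2 : ℝ) • Lκ (u + v)
      = -gradG v - (1/2 : ℝ) • L (u + v) + κ • (v - (1/2 : ℝ) • (u + v)) := by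
    rw [hgκ, hLκ]; module
  rw [hE, hE, hsplit, inner_add_right, inner_sub_right, inner_neg_right, real_inner_smul_right,
    real_inner_smul_right, hquad, hκ_part, real_inner_comm]
  linarith

/-- If `κ ≥ 2ℓ_g`, then `⟨u − v, g_κ(v) − (1/2)·L_κ(u + v)⟩ ≤ E[v] − E[u]`. -/
theorem stmt_1
    {V : Type*} [NormedAddCommGroup V] [InnerProductSpace ℝ V] [FiniteDimensional ℝ V]
    (L : V →ₗ[ℝ] V)
    (hLsymm : ∀ x y : V, ⟪L x, y⟫ = ⟪x, L y⟫)
    (hLpos : ∀ x : V, 0 ≤ ⟪x, L x⟫)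
    (G : V → ℝ) (gradG : V → V)
    (hG : ∀ x, HasGradientAt G (gradG x) x)
    (ℓ : ℝ≥0) (hℓ : 0 < ℓ)
    (hLip : LipschitzWith ℓ gradG)
    (κ : ℝ) (hκ : 2 * (ℓ : ℝ) ≤ κ)
    (E : V → ℝ) (hE : ∀ v, E v = (1/2) * ⟪v, L v⟫ + G v)
    (Lκ : V → V) (hLκ : ∀ v, Lκ v = L v + κ • v)
    (gκ : V → V) (hgκ : ∀ v, gκ v = -gradG v + κ • v)
    (u v : V) :
    ⟪u - v, gκ v - (1/2 : ℝ) • Lκ (u + v)⟫ ≤ E v - E u :=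
  stmt_1_general L hLsymm G gradG hG ℓ hLip κ hκ E hE Lκ hLκ gκ hgκ u v
end

section
/- If κ ≥ ℓ_g, then for all u, v ∈ V one has ⟨u − v, g_κ(v) − L_κ u⟩ ≤ E[v] − E[u] − (1/2)·⟨u − v, L_κ(u − v)⟩. -/
/-!
With `w = u - v` and `L` symmetric, `⟪w, L u⟫ = ½⟪u, L u⟫ - ½⟪v, L v⟫ + ½⟪w, L w⟫`, so the
quadratic part of the energy cancels exactly and the claim reduces to the descent lemma
`G u ≤ G v + ⟪∇G v, w⟫ + (ℓ/2)‖w‖²` together with `ℓ ≤ κ`. The descent lemma follows by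
comparing `t ↦ G (v + t • w)` on `[0, 1]` with the parabola `G v + t⟪∇G v, w⟫ + (ℓ/2)t²‖w‖²`,
whose derivative dominates by the Lipschitz bound on `∇G`.
-/

open scoped RealInnerProductSpace NNReal

section Descent

variable {V : Type*} [NormedAddCommGroup V] [InnerProductSpace ℝ V]

theorem LipschitzWith.inner_sub_smul_le {f : V → V} {ℓ : ℝ≥0} (hf : LipschitzWith ℓ f)
    (v w : V) {t : ℝ} (ht : 0 ≤ t) :
    ⟪f (v + t • w) - f v, w⟫ ≤ ℓ * t * ‖w‖ ^ 2 :=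
  calc ⟪f (v + t • w) - f v, w⟫ ≤ ‖f (v + t • w) - f v‖ * ‖w‖ := real_inner_le_norm _ _
    _ ≤ ℓ * ‖(v + t • w) - v‖ * ‖w‖ := by
        gcongr
        simpa only [dist_eq_norm] using hf.dist_le_mul (v + t • w) v
    _ = ℓ * t * ‖w‖ ^ 2 := by
        rw [add_sub_cancel_left, norm_smul, Real.norm_of_nonneg ht]
        ring

variable [CompleteSpace V]

theorem HasGradientAt.hasDerivAt_comp_add_smul_s2 {G : V → ℝ} {v w g : V} {t : ℝ}
    (hG : HasGradientAt G g (v + t • w)) :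
    HasDerivAt (fun s : ℝ => G (v + s • w)) ⟪g, w⟫ t := by
  have hline : HasDerivAt (fun s : ℝ => v + s • w) w t := by
    simpa using ((hasDerivAt_id t).smul_const w).const_add v
  have := hG.hasFDerivAt.comp_hasDerivAt t hline
  simp only [InnerProductSpace.toDual_apply_apply] at this
  exact this

theorem le_add_inner_add_of_lipschitzWith_gradient {G : V → ℝ} {gradG : V → V}
    (hG : ∀ x, HasGradientAt G (gradG x) x) {ℓ : ℝ≥0} (hLip : LipschitzWith ℓ gradG)
    (v w : V) :
    G (v + w) ≤ G v + ⟪gradG v, w⟫ + ℓ / 2 * ‖w‖ ^ 2 := by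
  have hf (t : ℝ) : HasDerivAt (fun s : ℝ => G (v + s • w)) ⟪gradG (v + t • w), w⟫ t :=
    (hG _).hasDerivAt_comp_add_smul_s2
  have hB (t : ℝ) : HasDerivAt (fun s : ℝ => G v + s * ⟪gradG v, w⟫ + ℓ / 2 * s ^ 2 * ‖w‖ ^ 2)
      (⟪gradG v, w⟫ + ℓ * t * ‖w‖ ^ 2) t := by
    refine ((((hasDerivAt_id' t).mul_const ⟪gradG v, w⟫).const_add (G v)).add
      (((hasDerivAt_pow 2 t).const_mul ((ℓ : ℝ) / 2)).mul_const (‖w‖ ^ 2))).congr_deriv ?_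
    simp only [Nat.cast_ofNat, Nat.add_one_sub_one, pow_one]
    ring
  have hbound (t : ℝ) (ht : t ∈ Set.Ico (0 : ℝ) 1) :
      ⟪gradG (v + t • w), w⟫ ≤ ⟪gradG v, w⟫ + ℓ * t * ‖w‖ ^ 2 := by
    have := hLip.inner_sub_smul_le v w ht.1
    rw [inner_sub_left] at this
    linarith
  have key := image_le_of_deriv_right_le_deriv_boundary
    (fun t _ => (hf t).continuousAt.continuousWithinAt) (fun t _ => (hf t).hasDerivWithinAt)
    (by simp) (fun t _ => (hB t).continuousAt.continuousWithinAt)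
    (fun t _ => (hB t).hasDerivWithinAt) hbound (Set.right_mem_Icc.2 zero_le_one)
  simpa using key

end Descent

theorem LinearMap.IsSymmetric.inner_sub_map_eq {V : Type*} [NormedAddCommGroup V]
    [InnerProductSpace ℝ V] {L : V →ₗ[ℝ] V} (hL : L.IsSymmetric) (u v : V) :
    ⟪u - v, L u⟫ = 1 / 2 * ⟪u, L u⟫ - 1 / 2 * ⟪v, L v⟫ + 1 / 2 * ⟪u - v, L (u - v)⟫ := by
  have hvu : ⟪v, L u⟫ = ⟪u, L v⟫ := by rw [← hL, real_inner_comm]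
  simp only [map_sub, inner_sub_left, inner_sub_right]
  linarith

theorem stmt_2_general
    {V : Type*} [NormedAddCommGroup V] [InnerProductSpace ℝ V] [FiniteDimensional ℝ V]
    (L : V →ₗ[ℝ] V)
    (hLsymm : ∀ x y : V, ⟪L x, y⟫ = ⟪x, L y⟫)
    (G : V → ℝ) (gradG : V → V)
    (hG : ∀ x, HasGradientAt G (gradG x) x)
    (ℓ : ℝ≥0)
    (hLip : LipschitzWith ℓ gradG)
    (κ : ℝ) (hκ : (ℓ : ℝ) ≤ κ)
    (E : V → ℝ) (hE : ∀ v, E v = (1/2) * ⟪v, L v⟫ + G v)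
    (Lκ : V → V) (hLκ : ∀ v, Lκ v = L v + κ • v)
    (gκ : V → V) (hgκ : ∀ v, gκ v = -gradG v + κ • v)
    (u v : V) :
    ⟪u - v, gκ v - Lκ u⟫ ≤ E v - E u - (1/2) * ⟪u - v, Lκ (u - v)⟫ := by
  have hdescent : G u ≤ G v + ⟪gradG v, u - v⟫ + ℓ / 2 * ‖u - v‖ ^ 2 := by
    simpa using le_add_inner_add_of_lipschitzWith_gradient hG hLip v (u - v)
  have hquad := LinearMap.IsSymmetric.inner_sub_map_eq hLsymm u v
  have hκ' : (ℓ : ℝ) / 2 * ‖u - v‖ ^ 2 ≤ κ / 2 * ‖u - v‖ ^ 2 := by gcongr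
  have hsplit : gκ v - Lκ u = -gradG v - L u - κ • (u - v) := by
    rw [hgκ, hLκ, smul_sub]
    abel
  rw [hsplit, hE, hE, hLκ, inner_sub_right, inner_sub_right, inner_neg_right,
    inner_add_right, real_inner_smul_right, real_inner_self_eq_norm_sq, real_inner_comm]
  linarith

/-- If `κ ≥ ℓ_g`, then
`⟨u − v, g_κ(v) − L_κ u⟩ ≤ E[v] − E[u] − (1/2)·⟨u − v, L_κ(u − v)⟩`. -/
theorem stmt_2
    {V : Type*} [NormedAddCommGroup V] [InnerProductSpace ℝ V] [FiniteDimensional ℝ V]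
    (L : V →ₗ[ℝ] V)
    (hLsymm : ∀ x y : V, ⟪L x, y⟫ = ⟪x, L y⟫)
    (hLpos : ∀ x : V, 0 ≤ ⟪x, L x⟫)
    (G : V → ℝ) (gradG : V → V)
    (hG : ∀ x, HasGradientAt G (gradG x) x)
    (ℓ : ℝ≥0) (hℓ : 0 < ℓ)
    (hLip : LipschitzWith ℓ gradG)
    (κ : ℝ) (hκ : (ℓ : ℝ) ≤ κ)
    (E : V → ℝ) (hE : ∀ v, E v = (1/2) * ⟪v, L v⟫ + G v)
    (Lκ : V → V) (hLκ : ∀ v, Lκ v = L v + κ • v)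
    (gκ : V → V) (hgκ : ∀ v, gκ v = -gradG v + κ • v)
    (u v : V) :
    ⟪u - v, gκ v - Lκ u⟫ ≤ E v - E u - (1/2) * ⟪u - v, Lκ (u - v)⟫ :=
  stmt_2_general L hLsymm G gradG hG ℓ hLip κ hκ E hE Lκ hLκ gκ hgκ u v
end

section
/- Fix z ∈ ℝ and define the s×s differentiation matrix D = (d_{kℓ}) by d_{kk} = θ_{k,k} + z/2 on the diagonal, d_{kℓ} = θ_{k,ℓ} + z for 1 ≤ ℓ < k ≤ s, and d_{kℓ} = 0 for ℓ > k. If the symmetric part (1/2)(D + Dᵀ) is positive semidefinite, then the average dissipation rate is nonnegative: z/2 + (1/s)·∑_{i=1}^{s} 1/a_{i+1,i} ≥ 0. -/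
/-!
The symmetric part of `D` has the same trace as `D`, namely `∑ₖ (θ_{k,k} + z/2) = ∑ₖ 1/a_{k+1,k} + s z/2`,
and the trace of a positive semidefinite matrix is nonnegative; dividing by `s` gives the claim.
-/

open Finset

theorem Finset.sum_Icc_one_eq_sum_fin {M : Type*} [AddCommMonoid M] (s : ℕ) (f : ℕ → M) :
    ∑ i ∈ Icc 1 s, f i = ∑ k : Fin s, f (k + 1) := by
  rw [Fin.sum_univ_eq_sum_range (fun k ↦ f (k + 1)), range_eq_Ico, sum_Ico_add' f]
  rfl

theorem Finset.nonneg_add_mean_of_sum_add_nonneg {ι : Type*} {t : Finset ι} (ht : t.Nonempty)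
    (x : ι → ℝ) (c : ℝ) (h : 0 ≤ ∑ i ∈ t, (x i + c)) :
    0 ≤ c + (1 / (#t : ℝ)) * ∑ i ∈ t, x i := by
  have hcard : (0 : ℝ) < #t := by exact_mod_cast ht.card_pos
  rw [sum_add_distrib, sum_const, nsmul_eq_mul] at h
  calc 0 ≤ (∑ i ∈ t, x i + #t * c) / #t := by positivity
    _ = _ := by field_simp; ring

theorem Matrix.trace_nonneg_of_posSemidef_symmPart {n : Type*} [Fintype n] {D : Matrix n n ℝ}
    (h : ((1 / 2 : ℝ) • (D + D.transpose)).PosSemidef) : 0 ≤ D.trace := by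
  have := h.trace_nonneg
  rw [trace_smul, trace_add, trace_transpose, smul_eq_mul] at this
  linarith

theorem stmt_5_general (s : ℕ) (hs : 1 ≤ s)
    (a θ : ℕ → ℕ → ℝ)
    (hθdiag : ∀ k, 1 ≤ k → k ≤ s → θ k k = 1 / a (k + 1) k)
    (z : ℝ)
    (D : Matrix (Fin s) (Fin s) ℝ)
    (hD : ∀ k l : Fin s,
      D k l = if (l : ℕ) = (k : ℕ) then θ ((k : ℕ) + 1) ((l : ℕ) + 1) + z / 2
        else if (l : ℕ) < (k : ℕ) then θ ((k : ℕ) + 1) ((l : ℕ) + 1) + z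
        else 0)
    (hpsd : (((1 : ℝ) / 2) • (D + D.transpose)).PosSemidef) :
    0 ≤ z / 2 + (1 / (s : ℝ)) * ∑ i ∈ Finset.Icc 1 s, 1 / a (i + 1) i := by
  have hdiag (k : Fin s) : D k k = 1 / a (k + 1 + 1) (k + 1) + z / 2 := by
    rw [hD, if_pos rfl, hθdiag _ (by omega) (by omega)]
  have htrace : 0 ≤ ∑ i ∈ Icc 1 s, (1 / a (i + 1) i + z / 2) := by
    simpa only [sum_Icc_one_eq_sum_fin, Matrix.trace, Matrix.diag, hdiag]
      using Matrix.trace_nonneg_of_posSemidef_symmPart hpsd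
  simpa using nonneg_add_mean_of_sum_add_nonneg (nonempty_Icc.mpr hs) _ _ htrace

/-- If the symmetric part of the differentiation matrix `D` (built from the
DOC kernels `θ` and the shift `z`) is positive semidefinite, then the average
dissipation rate `z/2 + (1/s)·∑ 1/a_{i+1,i}` is nonnegative. -/
theorem stmt_5 (s : ℕ) (hs : 1 ≤ s)
    (a θ : ℕ → ℕ → ℝ)
    (ha : ∀ k, 1 ≤ k → k ≤ s → a (k + 1) k ≠ 0)
    (hθdiag : ∀ k, 1 ≤ k → k ≤ s → θ k k = 1 / a (k + 1) k)
    (hθ : ∀ k j, 1 ≤ j → j < k → k ≤ s →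
      θ k j = -(1 / a (j + 1) j) * ∑ l ∈ Finset.Icc (j + 1) k, θ k l * a (l + 1) j)
    (z : ℝ)
    (D : Matrix (Fin s) (Fin s) ℝ)
    (hD : ∀ k l : Fin s,
      D k l = if (l : ℕ) = (k : ℕ) then θ ((k : ℕ) + 1) ((l : ℕ) + 1) + z / 2
        else if (l : ℕ) < (k : ℕ) then θ ((k : ℕ) + 1) ((l : ℕ) + 1) + z
        else 0)
    (hpsd : (((1 : ℝ) / 2) • (D + D.transpose)).PosSemidef) :
    0 ≤ z / 2 + (1 / (s : ℝ)) * ∑ i ∈ Finset.Icc 1 s, 1 / a (i + 1) i :=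
  stmt_5_general s hs a θ hθdiag z D hD hpsd
end

section
/- For every c₂ ∈ [1/2, 1] and every z < 0, the function g₂₁ satisfies g₂₁(c₂, z) > 0. -/
set_option maxHeartbeats 1000000

open Real

/-- Quartic lower bound on `exp` for nonnegative arguments. -/
lemma quartic_le_exp_aux (x : ℝ) (hx : 0 ≤ x) :
    1 + x + x ^ 2 / 2 + x ^ 3 / 6 + x ^ 4 / 24 ≤ Real.exp x := by
  have h := Real.sum_le_exp_of_nonneg hx 5
  simp [Finset.sum_range_succ, Nat.factorial] at h
  linarith

/-- Padé-type lower bound: `(2 - x) ≤ (2 + x) * exp (-x)` for `x ≥ 0`. -/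
lemma pade_aux (x : ℝ) (hx : 0 ≤ x) : 2 - x ≤ (2 + x) * Real.exp (-x) := by
  have hD : ∀ t : ℝ, HasDerivAt (fun t : ℝ => (2 + t) * Real.exp (-t) + t)
      (1 * Real.exp (-t) + (2 + t) * (Real.exp (-t) * -1) + 1) t := by
    intro t
    have h1 : HasDerivAt (fun x : ℝ => 2 + x) 1 t := (hasDerivAt_id t).const_add 2
    have h2 : HasDerivAt (fun x : ℝ => Real.exp (-x)) (Real.exp (-t) * -1) t :=
      (Real.hasDerivAt_exp (-t)).comp t (hasDerivAt_neg t)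
    exact (h1.mul h2).add (hasDerivAt_id t)
  have key : Monotone (fun t : ℝ => (2 + t) * Real.exp (-t) + t) := by
    apply monotone_of_deriv_nonneg (fun t => (hD t).differentiableAt)
    intro t
    rw [(hD t).deriv]
    have he : 0 < Real.exp (-t) := Real.exp_pos _
    have h1 : (1 + t) * Real.exp (-t) ≤ 1 := by
      have h0 := Real.add_one_le_exp t
      have h2 : (t + 1) * Real.exp (-t) ≤ Real.exp t * Real.exp (-t) :=
        mul_le_mul_of_nonneg_right h0 he.le
      rw [← Real.exp_add] at h2
      simp at h2
      linarith
    nlinarith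
  have h0 := key hx
  simp only [neg_zero, Real.exp_zero, mul_one, add_zero] at h0
  linarith

lemma poly_aux (z : ℝ) (hz : z < 0) :
    (2 - z) * ((2 - 3 * z) * (1 - z))
      < 16 * (1 + (-z) + (-z) ^ 2 / 2 + (-z) ^ 3 / 6 + (-z) ^ 4 / 24) := by
  nlinarith [sq_nonneg (z ^ 2 + z - 3), sq_nonneg (z ^ 2 - 3), sq_nonneg (z + 1), sq_nonneg z,
    mul_pos (mul_pos (neg_pos.2 hz) (neg_pos.2 hz)) (neg_pos.2 hz)]

lemma hfin_aux (z : ℝ) (hz : z < 0) :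
    z ^ 4 * Real.exp z / 16 < z ^ 2 / (2 - z) * (z ^ 2 / ((2 - 3 * z) * (1 - z))) := by
  have hzz : (0:ℝ) < z * z := mul_pos_of_neg_of_neg hz hz
  have hz4 : (0:ℝ) < z ^ 4 := by nlinarith [mul_pos hzz hzz]
  have h1z : (0:ℝ) < 1 - z := by linarith
  have h2z : (0:ℝ) < 2 - z := by linarith
  have h3z : (0:ℝ) < 2 - 3 * z := by linarith
  have hEpos : 0 < Real.exp z := Real.exp_pos _
  have hq := quartic_le_exp_aux (-z) (by linarith)
  have hinv : Real.exp z * Real.exp (-z) = 1 := by rw [← Real.exp_add]; simp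
  have hEQ : Real.exp z * (1 + (-z) + (-z) ^ 2 / 2 + (-z) ^ 3 / 6 + (-z) ^ 4 / 24) ≤ 1 := by
    nlinarith [mul_le_mul_of_nonneg_left hq hEpos.le]
  have hpoly := poly_aux z hz
  have hEd : Real.exp z * ((2 - z) * ((2 - 3 * z) * (1 - z))) < 16 := by
    nlinarith [mul_lt_mul_of_pos_left hpoly hEpos]
  have heq : z ^ 2 / (2 - z) * (z ^ 2 / ((2 - 3 * z) * (1 - z)))
      = z ^ 4 / ((2 - z) * ((2 - 3 * z) * (1 - z))) := by
    rw [div_mul_div_comm, show z ^ 2 * z ^ 2 = z ^ 4 by ring]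
  have hd : (0:ℝ) < (2 - z) * ((2 - 3 * z) * (1 - z)) := mul_pos h2z (mul_pos h3z h1z)
  rw [heq, div_lt_div_iff₀ (by norm_num) hd]
  have hmul := mul_lt_mul_of_pos_left hEd hz4
  nlinarith [hmul]

/-- Positivity of the auxiliary function `g₂₁` for `c₂ ∈ [1/2, 1]` and `z < 0`. -/
theorem stmt_8 (c₂ z : ℝ) (hc : c₂ ∈ Set.Icc (1/2 : ℝ) 1) (hz : z < 0) :
    0 < 2 * c₂ * z * Real.exp ((c₂ + 2) * z)
      - c₂ ^ 2 * z ^ 2 * Real.exp (2 * c₂ * z)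
      - 2 * c₂ * z * Real.exp ((c₂ + 1) * z) * (1 - (c₂ - 1) * z)
      - Real.exp (2 * z) * (c₂ ^ 2 * z ^ 2 + 1)
      + 2 * Real.exp z * (1 - (c₂ - 1) * z)
      + (z + 1) * ((2 * c₂ - 1) * z - 1) := by
  obtain ⟨ha1, ha2⟩ := hc
  obtain ⟨E, hE⟩ : ∃ x : ℝ, x = Real.exp z := ⟨_, rfl⟩
  obtain ⟨Ea, hEa⟩ : ∃ x : ℝ, x = Real.exp (c₂ * z) := ⟨_, rfl⟩
  have e1 : Real.exp ((c₂ + 2) * z) = Ea * (E * E) := by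
    rw [hE, hEa, show (c₂ + 2) * z = c₂ * z + (z + z) by ring, Real.exp_add, Real.exp_add]
  have e2 : Real.exp (2 * c₂ * z) = Ea * Ea := by
    rw [hEa, show 2 * c₂ * z = c₂ * z + c₂ * z by ring, Real.exp_add]
  have e3 : Real.exp ((c₂ + 1) * z) = Ea * E := by
    rw [hE, hEa, show (c₂ + 1) * z = c₂ * z + z by ring, Real.exp_add]
  have e4 : Real.exp (2 * z) = E * E := by
    rw [hE, show (2 : ℝ) * z = z + z by ring, Real.exp_add]
  rw [e1, e2, e3, e4, ← hE]
  -- basic positivity facts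
  have hEpos : 0 < E := by rw [hE]; exact Real.exp_pos _
  have hEapos : 0 < Ea := by rw [hEa]; exact Real.exp_pos _
  have hz2 : (0:ℝ) < z ^ 2 := by nlinarith
  have hz4 : (0:ℝ) < z ^ 4 := by nlinarith
  have h1z : (0:ℝ) < 1 - z := by linarith
  have h2z : (0:ℝ) < 2 - z := by linarith
  have h3z : (0:ℝ) < 2 - 3 * z := by linarith
  have hne1 : (1 - z) ≠ 0 := ne_of_gt h1z
  have hne2 : (2 - z) ≠ 0 := ne_of_gt h2z
  have hne3 : (2 - 3 * z) ≠ 0 := ne_of_gt h3z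
  obtain ⟨h, hh⟩ : ∃ x : ℝ, x = E - 1 - z := ⟨_, rfl⟩
  -- h > 0
  have hpos : 0 < h := by
    have := Real.add_one_lt_exp (ne_of_lt hz)
    rw [hh, hE]; linarith
  -- h ≥ z²/(2-z)  (from Padé bound)
  have h_lo : z ^ 2 / (2 - z) ≤ h := by
    have hp := pade_aux (-z) (by linarith)
    rw [neg_neg] at hp
    rw [div_le_iff₀ h2z]
    have h2 : 2 + z ≤ (2 + -z) * E := by simpa [hE] using hp
    rw [hh]; nlinarith
  -- h ≤ z²/(1-z)  (from E ≤ 1/(1-z))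
  have h_hi : h ≤ z ^ 2 / (1 - z) := by
    have hp : (-z) + 1 ≤ Real.exp (-z) := Real.add_one_le_exp (-z)
    have hEinv : E * Real.exp (-z) = 1 := by
      rw [hE, ← Real.exp_add]; simp
    have hE_le : E * (1 - z) ≤ 1 := by nlinarith [Real.exp_pos (-z)]
    rw [le_div_iff₀ h1z, hh]
    nlinarith
  -- inner factor lower bound
  have hinner : z ^ 2 / ((2 - 3 * z) * (1 - z)) ≤ 2 * c₂ * z * (Ea * E - 1) - h := by
    have hle : Ea * E ≤ Real.exp (3 / 2 * z) := by
      rw [← e3]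
      apply Real.exp_le_exp.2
      nlinarith
    have hp : (-(3 / 2 * z)) + 1 ≤ Real.exp (-(3 / 2 * z)) := Real.add_one_le_exp _
    have hinv : Real.exp (3 / 2 * z) * Real.exp (-(3 / 2 * z)) = 1 := by
      rw [← Real.exp_add]; simp
    have hexp32pos : 0 < Real.exp (3 / 2 * z) := Real.exp_pos _
    -- exp(3z/2)(2-3z) ≤ 2
    have h32 : Real.exp (3 / 2 * z) * (2 - 3 * z) ≤ 2 := by
      nlinarith [mul_le_mul_of_nonneg_left hp hexp32pos.le]
    have hEaE1 : Ea * E * (2 - 3 * z) ≤ 2 :=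
      le_trans (mul_le_mul_of_nonneg_right hle h3z.le) h32
    -- (-z) * (1 - Ea*E) ≥ 3z²/(2-3z)
    have hkey : 3 * z ^ 2 / (2 - 3 * z) ≤ (-z) * (1 - Ea * E) := by
      rw [div_le_iff₀ h3z]
      nlinarith [mul_le_mul_of_nonneg_left hEaE1 (by linarith : (0:ℝ) ≤ -z)]
    have hEaE2 : Ea * E < 1 := by
      rw [← e3]; apply Real.exp_lt_one_iff.2; nlinarith
    have h3 : 0 ≤ (-z) * (1 - Ea * E) := by
      apply mul_nonneg (by linarith); linarith
    have hstep : 3 * z ^ 2 / (2 - 3 * z) ≤ 2 * c₂ * z * (Ea * E - 1) := by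
      have h4 : 1 * ((-z) * (1 - Ea * E)) ≤ (2 * c₂) * ((-z) * (1 - Ea * E)) :=
        mul_le_mul_of_nonneg_right (by linarith) h3
      nlinarith
    have halg : 3 * z ^ 2 / (2 - 3 * z) - z ^ 2 / (1 - z)
        = z ^ 2 / ((2 - 3 * z) * (1 - z)) := by
      field_simp; ring
    linarith
  -- RHS upper bound: c₂² z² (Ea - E)² ≤ z⁴ E / 16
  have hrhs : c₂ ^ 2 * z ^ 2 * (Ea - E) ^ 2 ≤ z ^ 4 * E / 16 := by
    obtain ⟨D, hD⟩ : ∃ x : ℝ, x = Real.exp ((1 - c₂) * (-z)) := ⟨_, rfl⟩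
    have hDpos : 0 < D := by rw [hD]; exact Real.exp_pos _
    have hEaED : Ea = E * D := by
      rw [hEa, hE, hD, ← Real.exp_add]
      congr 1; ring
    have hu : 0 ≤ (1 - c₂) * (-z) := mul_nonneg (by linarith) (by linarith)
    have hDinv : D * Real.exp (-((1 - c₂) * (-z))) = 1 := by
      rw [hD, ← Real.exp_add]; simp
    have hp : (-((1 - c₂) * (-z))) + 1 ≤ Real.exp (-((1 - c₂) * (-z))) :=
      Real.add_one_le_exp _
    have hD1 : D - 1 ≤ (1 - c₂) * (-z) * D := by
      nlinarith [mul_le_mul_of_nonneg_left hp hDpos.le]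
    have hD2 : 1 ≤ D := by rw [hD]; exact Real.one_le_exp hu
    have hEaEge : 0 ≤ Ea - E := by rw [hEaED]; nlinarith
    have hEaEle : Ea - E ≤ (1 - c₂) * (-z) * Ea := by
      rw [hEaED]
      nlinarith [mul_le_mul_of_nonneg_left hD1 hEpos.le]
    have hsq : (Ea - E) ^ 2 ≤ (1 - c₂) ^ 2 * z ^ 2 * Ea ^ 2 := by
      nlinarith [mul_self_le_mul_self hEaEge hEaEle]
    have hEa2 : Ea ^ 2 ≤ E := by
      rw [pow_two, ← e2, hE]
      exact Real.exp_le_exp.2 (by nlinarith)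
    have hc16 : c₂ ^ 2 * (1 - c₂) ^ 2 ≤ 1 / 16 := by
      have ht0 : 0 ≤ c₂ * (1 - c₂) := mul_nonneg (by linarith) (by linarith)
      have ht1 : c₂ * (1 - c₂) ≤ 1 / 4 := by nlinarith [sq_nonneg (c₂ - 1/2)]
      nlinarith
    calc c₂ ^ 2 * z ^ 2 * (Ea - E) ^ 2
        ≤ c₂ ^ 2 * z ^ 2 * ((1 - c₂) ^ 2 * z ^ 2 * Ea ^ 2) := by
          apply mul_le_mul_of_nonneg_left hsq (by positivity)
      _ = (c₂ ^ 2 * (1 - c₂) ^ 2) * (z ^ 4 * Ea ^ 2) := by ring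
      _ ≤ (1 / 16) * (z ^ 4 * E) := by
          apply mul_le_mul hc16 ?_ (by positivity) (by norm_num)
          nlinarith [mul_le_mul_of_nonneg_left hEa2 hz4.le]
      _ = z ^ 4 * E / 16 := by ring
  -- lower bound on the product
  have hA : z ^ 2 / (2 - z) * (z ^ 2 / ((2 - 3 * z) * (1 - z)))
      ≤ h * (2 * c₂ * z * (Ea * E - 1) - h) :=
    mul_le_mul h_lo hinner (by positivity) hpos.le
  have hfin := hfin_aux z hz
  rw [← hE] at hfin
  have hident : 2 * c₂ * z * (Ea * (E * E))
      - c₂ ^ 2 * z ^ 2 * (Ea * Ea)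
      - 2 * c₂ * z * (Ea * E) * (1 - (c₂ - 1) * z)
      - E * E * (c₂ ^ 2 * z ^ 2 + 1)
      + 2 * E * (1 - (c₂ - 1) * z)
      + (z + 1) * ((2 * c₂ - 1) * z - 1)
      = h * (2 * c₂ * z * (Ea * E - 1) - h)
        - c₂ ^ 2 * z ^ 2 * (Ea - E) ^ 2 := by rw [hh]; ring
  rw [hident]
  linarith
end

section
/- For every c₂ ∈ [3/11, 1] and every z < 0, the function g₂₂ satisfies g₂₂(c₂, z) > 0. -/
lemma key_poly (c a b : ℝ) (hc1 : 3/11 ≤ c) (hc2 : c ≤ 1) (hb0 : 0 < b) (hb1 : b < 1)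
    (hba : b ≤ a) (ha1 : a < 1) (h4 : a^4 ≤ b) :
    0 < -4*c^2*(a-b)^2 + 4*c*(1-b)*(1-a*b) - (1-b)^2 := by
  have g1 : (0:ℝ) ≤ c - 3/11 := by linarith
  have g2 : (0:ℝ) ≤ 1 - c := by linarith
  have g3 : (0:ℝ) ≤ b - a^4 := by linarith
  have g4 : (0:ℝ) ≤ a - b := by linarith
  have g5 : (0:ℝ) ≤ 1 - b := by linarith
  have g6 : (0:ℝ) ≤ b := le_of_lt hb0
  have g7 : (0:ℝ) ≤ 1 - a := by linarith
  have g8 : (0:ℝ) ≤ a := le_trans g6 hba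
  have hb1' : (0:ℝ) < 1 - b := by linarith
  have hq : (0:ℝ) < (1 - b)^2 := by nlinarith
  linarith [hq,
mul_nonneg (g3) g4,
    mul_nonneg (mul_nonneg (g1) g3) g4,
    mul_nonneg (mul_nonneg (g1) g4) g7,
    mul_nonneg (mul_nonneg (g1) g5) g7,
    mul_nonneg (mul_nonneg (g3) g4) g7,
    mul_nonneg (mul_nonneg (g4) g5) g6,
    mul_nonneg (mul_nonneg (mul_nonneg (g1) g1) g7) g7,
    mul_nonneg (mul_nonneg (mul_nonneg (g1) g2) g5) g5,
    mul_nonneg (mul_nonneg (mul_nonneg (g1) g4) g6) g7,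
    mul_nonneg (mul_nonneg (mul_nonneg (g1) g4) g7) g7,
    mul_nonneg (mul_nonneg (mul_nonneg (g1) g5) g5) g6,
    mul_nonneg (mul_nonneg (mul_nonneg (g1) g5) g7) g8,
    mul_nonneg (mul_nonneg (mul_nonneg (g3) g4) g5) g6,
    mul_nonneg (mul_nonneg (mul_nonneg (g3) g5) g5) g5,
    mul_nonneg (mul_nonneg (mul_nonneg (g3) g5) g5) g8,
    mul_nonneg (mul_nonneg (mul_nonneg (g6) g7) g7) g7,
    mul_nonneg (mul_nonneg (sq_nonneg ((1 : ℝ)*a + (1 : ℝ)*b + (-1 : ℝ))) g3) g7,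
    mul_nonneg (mul_nonneg (sq_nonneg ((1 : ℝ)*a + (1 : ℝ)*b + (-1 : ℝ))) g5) g5,
    mul_nonneg (mul_nonneg (sq_nonneg ((1 : ℝ)*a + (-4 : ℝ)*b + (0 : ℝ))) g3) g7,
    mul_nonneg (mul_nonneg (sq_nonneg ((1 : ℝ)*a + (-4 : ℝ)*b + (0 : ℝ))) g4) g5,
    mul_nonneg (mul_nonneg (sq_nonneg ((1 : ℝ)*a + (-4 : ℝ)*b + (0 : ℝ))) g4) g7,
    mul_nonneg (sq_nonneg ((2 : ℝ)*a + (-1 : ℝ)*b + (-1 : ℝ))) g2,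
    mul_nonneg (sq_nonneg ((2 : ℝ)*a + (-1 : ℝ)*b + (-1 : ℝ))) g4,
    mul_nonneg (mul_nonneg (sq_nonneg ((2 : ℝ)*a + (-1 : ℝ)*b + (-1 : ℝ))) g1) g2,
    mul_nonneg (mul_nonneg (sq_nonneg ((2 : ℝ)*a + (-1 : ℝ)*b + (-1 : ℝ))) g2) g4,
    mul_nonneg (mul_nonneg (sq_nonneg ((2 : ℝ)*a + (-1 : ℝ)*b + (-1 : ℝ))) g2) g6,
    mul_nonneg (mul_nonneg (sq_nonneg ((2 : ℝ)*a + (-1 : ℝ)*b + (-1 : ℝ))) g3) g4,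
    mul_nonneg (mul_nonneg (sq_nonneg ((2 : ℝ)*a + (-1 : ℝ)*b + (-1 : ℝ))) g4) g6,
    mul_nonneg (mul_nonneg (sq_nonneg ((2 : ℝ)*a + (-1 : ℝ)*b + (-1 : ℝ))) g4) g8,
    mul_nonneg (mul_nonneg (sq_nonneg (a^2 - b)) g2) g7,
    mul_nonneg (mul_nonneg (sq_nonneg (a^2 - b)) g6) g7,
    mul_nonneg (mul_nonneg (sq_nonneg (a^2 - a)) g1) g5,
    mul_nonneg (mul_nonneg (sq_nonneg (a^2 - a)) g4) g7,
    mul_nonneg (mul_nonneg (sq_nonneg (a^2 - a)) g6) g6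
    ]

/-- Positivity of the auxiliary function `g₂₂` for `c₂ ∈ [3/11, 1]` and `z < 0`. -/
theorem stmt_9 (c₂ z : ℝ) (hc : c₂ ∈ Set.Icc (3/11 : ℝ) 1) (hz : z < 0) :
    0 < -4 * c₂ ^ 2 * (Real.exp (c₂ * z) - Real.exp z) ^ 2
      + 4 * c₂ * (1 - Real.exp z) * (1 - Real.exp ((c₂ + 1) * z))
      - (1 - Real.exp z) ^ 2 := by
  obtain ⟨hc1, hc2⟩ := hc
  set a := Real.exp (c₂ * z) with ha_def
  set b := Real.exp z with hb_def
  have hb0 : 0 < b := Real.exp_pos z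
  have hb1 : b < 1 := by
    rw [hb_def]; exact Real.exp_lt_one_iff.mpr hz
  have ha1 : a < 1 := by
    rw [ha_def]; exact Real.exp_lt_one_iff.mpr (by nlinarith)
  have hba : b ≤ a := by
    rw [ha_def, hb_def]; exact Real.exp_le_exp.mpr (by nlinarith)
  have h4 : a ^ 4 ≤ b := by
    rw [ha_def, hb_def, ← Real.exp_nat_mul]
    exact Real.exp_le_exp.mpr (by push_cast; nlinarith)
  have hab : Real.exp ((c₂ + 1) * z) = a * b := by
    rw [ha_def, hb_def, ← Real.exp_add]; ring_nf
  rw [hab]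
  have := key_poly c₂ a b hc1 hc2 hb0 hb1 hba ha1 h4
  linarith [this]
end

section
/- Define R̃(c, z) := z + z/(2(e^{cz} − 1)) + c·z²/(2(e^z − 1 − z)) for z < 0 (this equals z + 1/(2c·φ1(cz)) + c/(2·φ2(z)), the underestimated average dissipation rate of the one-parameter second-order EERK method with abscissa c). Then for every c ∈ (0, 1), R̃(c, z) tends to −∞ as z → −∞, while for c = 1, R̃(1, z) tends to 1/2 as z → −∞. -/
/-!
Splitting off the linear part, `R̃(c, z) = (1 - c) z / 2 + g(c z) / (2c) + (c / 2) h(z)` with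
`g(w) = w / (e^w - 1) + w = w e^w / (e^w - 1)` and
`h(z) = z² / (e^z - 1 - z) + z = (e^z - 1) / ((e^z - 1) / z - 1)`.
As `z → −∞`, `g(c z) → 0` and `h(z) → 1`, so `R̃(c, z) = (1 - c) z / 2 + c / 2 + o(1)`:
this diverges to `−∞` for `c < 1` and tends to `1/2` for `c = 1`.
-/

open Filter Real Topology

theorem tendsto_mul_exp_atBot : Tendsto (fun x : ℝ => x * exp x) atBot (𝓝 0) := by
  have h := (tendsto_pow_mul_exp_neg_atTop_nhds_zero 1).comp tendsto_neg_atBot_atTop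
  simpa using h.neg

theorem tendsto_exp_sub_one_div_atBot : Tendsto (fun x : ℝ => (exp x - 1) / x) atBot (𝓝 0) :=
  (tendsto_exp_atBot.sub_const 1).div_atBot tendsto_id

theorem tendsto_div_exp_sub_one_add_self_atBot :
    Tendsto (fun x : ℝ => x / (exp x - 1) + x) atBot (𝓝 0) := by
  have h : Tendsto (fun x : ℝ => x * exp x / (exp x - 1)) atBot (𝓝 (0 / (0 - 1))) :=
    tendsto_mul_exp_atBot.div (tendsto_exp_atBot.sub_const 1) (by norm_num)
  rw [zero_div] at h
  refine h.congr' ?_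
  filter_upwards [eventually_lt_atBot 0] with x hx
  have : exp x - 1 ≠ 0 := by linarith [exp_lt_one_iff.mpr hx]
  field_simp
  ring

theorem tendsto_sq_div_exp_sub_one_sub_self_add_self_atBot :
    Tendsto (fun x : ℝ => x ^ 2 / (exp x - 1 - x) + x) atBot (𝓝 1) := by
  have h : Tendsto (fun x : ℝ => (exp x - 1) / ((exp x - 1) / x - 1)) atBot
      (𝓝 ((0 - 1) / (0 - 1))) :=
    (tendsto_exp_atBot.sub_const 1).div (tendsto_exp_sub_one_div_atBot.sub_const 1) (by norm_num)
  rw [div_self (by norm_num)] at h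
  refine h.congr' ?_
  filter_upwards [eventually_lt_atBot 0] with x hx
  have : exp x - 1 - x ≠ 0 := by linarith [add_one_lt_exp hx.ne]
  rw [div_sub_one hx.ne]
  field_simp
  ring

noncomputable def dissipationRate (c z : ℝ) : ℝ :=
  z + z / (2 * (exp (c * z) - 1)) + c * z ^ 2 / (2 * (exp z - 1 - z))

theorem dissipationRate_eq {c : ℝ} (hc : c ≠ 0) (z : ℝ) :
    dissipationRate c z = (1 - c) / 2 * z + (c * z / (exp (c * z) - 1) + c * z) / (2 * c)
      + c / 2 * (z ^ 2 / (exp z - 1 - z) + z) := by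
  unfold dissipationRate
  field_simp
  ring

theorem tendsto_dissipationRate_sub_linear_atBot {c : ℝ} (hc : 0 < c) :
    Tendsto (fun z => dissipationRate c z - (1 - c) / 2 * z) atBot (𝓝 (c / 2)) := by
  have hscaled := tendsto_div_exp_sub_one_add_self_atBot.comp
    (tendsto_id.const_mul_atBot hc)
  have h := (hscaled.div_const (2 * c)).add
    (tendsto_sq_div_exp_sub_one_sub_self_add_self_atBot.const_mul (c / 2))
  rw [zero_div, zero_add, mul_one] at h
  refine h.congr fun z => ?_
  simp only [Function.comp_apply, id, dissipationRate_eq hc.ne']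
  ring

/-- For the underestimated average dissipation rate
`R̃(c, z) = z + z/(2(e^{cz} − 1)) + c z²/(2(e^z − 1 − z))` of the one-parameter
second-order EERK method: for `c ∈ (0,1)`, `R̃(c, z) → −∞` as `z → −∞`, while
`R̃(1, z) → 1/2` as `z → −∞`. -/
theorem stmt_19 (R : ℝ → ℝ → ℝ)
    (hR : ∀ c z : ℝ, z < 0 →
      R c z = z + z / (2 * (Real.exp (c * z) - 1))
        + c * z ^ 2 / (2 * (Real.exp z - 1 - z))) :
    (∀ c : ℝ, c ∈ Set.Ioo (0 : ℝ) 1 →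
      Filter.Tendsto (fun z => R c z) Filter.atBot Filter.atBot)
    ∧ Filter.Tendsto (fun z => R 1 z) Filter.atBot (nhds (1/2)) := by
  have hR_eq (c : ℝ) : (fun z => R c z) =ᶠ[atBot] dissipationRate c := by
    filter_upwards [eventually_lt_atBot 0] with z hz using hR c z hz
  refine ⟨fun c ⟨hc0, hc1⟩ => ?_, ?_⟩
  · have hlin : Tendsto (fun z => (1 - c) / 2 * z) atBot atBot :=
      tendsto_id.const_mul_atBot (by linarith)
    refine (tendsto_congr' (hR_eq c)).2 ?_
    simpa using hlin.atBot_add (tendsto_dissipationRate_sub_linear_atBot hc0)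
  · refine (tendsto_congr' (hR_eq 1)).2 ?_
    simpa using tendsto_dissipationRate_sub_linear_atBot one_pos
end
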